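/- (Provable guarantee for feature-restricted finite optimisation.) Let α ∈ E be strictly classified as c₀ (g(α,c₀) > 0), let c ≠ c₀ be a target class, d > 0, τ > 0, δ = (n·τ^p)^{1/p}, and let S ⊆ Fin n be a set of coordinates (a feature). Call x an S-restricted adversarial example if ‖x − α‖_p ≤ d, g(x,c) > 0, and x i = α i for every i ∉ S. Assume (i) the set of S-restricted adversarial examples is nonempty, and (ii) for every τ-grid point x' with respect to α there is a class c_{x'} top at x' with δ ≤ 2·g(x', c_{x'}) / M(c_{x'}). Let m_S = sInf { ‖x − α‖_p : x is an S-restricted adversarial example } and m_{G,S} = sInf { ‖y − α‖_p : y is a τ-grid point with respect to α, g(y,c) > 0, and y i = α i for every i ∉ S }. Then m_{G,S} − δ/2 ≤ m_S ≤ m_{G,S}. -/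

import Mathlib

/-- `x` is a τ-grid point with respect to `α`: every coordinate of `x` differs
from the corresponding coordinate of `α` by a natural multiple of `τ`. -/
def IsGridPoint {n : ℕ} {q : ENNReal} (τ : ℝ)
    (α x : PiLp q (fun _ : Fin n => ℝ)) : Prop :=
  ∀ i, ∃ m : ℕ, |x i - α i| = m * τ

/-- The minimum confidence margin of class `c` at `x`:
`g(x,c) = min_{c' ≠ c} (f c x − f c' x)`. -/
noncomputable def margin {E : Type*} {C : Type*} [Fintype C] [DecidableEq C] [Nontrivial C]
    (f : C → E → ℝ) (c : C) (x : E) : ℝ :=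
  (Finset.univ.erase c).inf'
    (by obtain ⟨b, hb⟩ := exists_ne c
        exact ⟨b, Finset.mem_erase.2 ⟨hb, Finset.mem_univ b⟩⟩)
    (fun c' => f c x - f c' x)

/-- `M(c) = max_{c' ≠ c} (K c + K c')`. -/
noncomputable def Mconst {C : Type*} [Fintype C] [DecidableEq C] [Nontrivial C]
    (K : C → ℝ) (c : C) : ℝ :=
  (Finset.univ.erase c).sup'
    (by obtain ⟨b, hb⟩ := exists_ne c
        exact ⟨b, Finset.mem_erase.2 ⟨hb, Finset.mem_univ b⟩⟩)
    (fun c' => K c + K c')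

/-!
Round an adversarial example `x` coordinatewise to the nearest point `x'` of the τ-grid
centred at `α`. Each coordinate moves by at most `τ/2`, so `dist x x' ≤ δ/2`, and the
coordinates outside `S` stay untouched. At `x'` some class `c'` has margin at least
`M(c') δ / 2`; since each difference `f a − f b` is `(K a + K b)`-Lipschitz, that margin
survives on the ball of radius `δ/2` around `x'`, so `c' = c` and `x'` is strictly classified
as `c`. Hence `m_{G,S} ≤ ‖x' − α‖ ≤ ‖x − α‖ + δ/2`. Conversely, a grid point strictly
classified as `c` is an `S`-restricted adversarial example unless it is farther than `d` from
`α`, and then it is farther than the adversarial example we are given.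
-/

section Margin

variable {E C : Type*}

theorem sub_sub_sub_le_mul_dist [PseudoMetricSpace E] {f : C → E → ℝ} {K : C → ℝ}
    (hf : ∀ c x y, |f c x - f c y| ≤ K c * dist x y) (a b : C) (x y : E) :
    (f a y - f b y) - (f a x - f b x) ≤ (K a + K b) * dist x y := by
  have ha := abs_le.1 (hf a x y)
  have hb := abs_le.1 (hf b x y)
  linarith [ha.1, hb.2]

variable [Fintype C] [DecidableEq C] [Nontrivial C]

theorem margin_le_sub {f : C → E → ℝ} {c c' : C} (h : c' ≠ c) (x : E) :
    margin f c x ≤ f c x - f c' x :=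
  Finset.inf'_le _ (Finset.mem_erase.2 ⟨h, Finset.mem_univ _⟩)

theorem add_le_Mconst (K : C → ℝ) {c c' : C} (h : c' ≠ c) : K c + K c' ≤ Mconst K c :=
  Finset.le_sup' (fun b => K c + K b) (Finset.mem_erase.2 ⟨h, Finset.mem_univ _⟩)

theorem Mconst_pos {K : C → ℝ} (hK : ∀ c, 0 < K c) (c : C) : 0 < Mconst K c := by
  obtain ⟨b, hb⟩ := exists_ne c
  exact (add_pos (hK c) (hK b)).trans_le (add_le_Mconst K hb)

theorem margin_pos_iff {f : C → E → ℝ} {c : C} {x : E} :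
    0 < margin f c x ↔ ∀ c' ≠ c, f c' x < f c x := by
  simp [margin, Finset.lt_inf'_iff]

theorem margin_pos_of_Mconst_mul_dist_le [PseudoMetricSpace E] {f : C → E → ℝ} {K : C → ℝ}
    (hf : ∀ c x y, |f c x - f c y| ≤ K c * dist x y)
    {c c' : C} {x y : E} (hx : 0 < margin f c x) (hy : Mconst K c' * dist x y ≤ margin f c' y) :
    0 < margin f c y := by
  have hmargin : ∀ b ≠ c', (K c' + K b) * dist x y ≤ f c' y - f b y := fun b hb =>
    (mul_le_mul_of_nonneg_right (add_le_Mconst K hb) dist_nonneg).trans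
      (hy.trans (margin_le_sub hb y))
  obtain rfl : c' = c := by
    by_contra hne
    have := sub_sub_sub_le_mul_dist hf c c' y x
    rw [dist_comm] at this
    linarith [hmargin c (Ne.symm hne), margin_le_sub (f := f) hne x]
  refine margin_pos_iff.2 fun b hb => ?_
  have := sub_sub_sub_le_mul_dist hf b c' x y
  -- `y` wins against `b` by the margin bound when `x, y` are far apart and by continuity
  -- from `x` when they are close; adding the two estimates covers both cases.
  linarith [hmargin b hb, margin_le_sub (f := f) hb x, margin_pos_iff.1 hx b hb]

end Margin

theorem abs_sub_round_div_mul_le {τ : ℝ} (hτ : 0 < τ) (r : ℝ) :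
    |r - round (r / τ) * τ| ≤ τ / 2 := by
  have h := abs_sub_round (r / τ)
  calc |r - round (r / τ) * τ| = |r / τ - round (r / τ)| * τ := by
        rw [← abs_of_pos hτ, ← abs_mul, abs_of_pos hτ, sub_mul, div_mul_cancel₀ r hτ.ne']
    _ ≤ 1 / 2 * τ := by gcongr
    _ = τ / 2 := by ring

theorem PiLp.dist_le_of_forall_dist_le {ι : Type*} [Fintype ι] {β : ι → Type*}
    [∀ i, PseudoMetricSpace (β i)] {p : ℝ} (hp : 0 < p) {x y : PiLp (ENNReal.ofReal p) β}
    {r : ℝ} (h : ∀ i, dist (x i) (y i) ≤ r) :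
    dist x y ≤ ((Fintype.card ι : ℝ) * r ^ p) ^ (1 / p) := by
  have hsum : ∑ i, dist (x i) (y i) ^ p ≤ (Fintype.card ι : ℝ) * r ^ p := by
    calc ∑ i, dist (x i) (y i) ^ p ≤ ∑ _i : ι, r ^ p :=
          Finset.sum_le_sum fun i _ => Real.rpow_le_rpow dist_nonneg (h i) hp.le
      _ = (Fintype.card ι : ℝ) * r ^ p := by simp
  have hq : (ENNReal.ofReal p).toReal = p := ENNReal.toReal_ofReal hp.le
  rw [PiLp.dist_eq_sum (by rwa [hq]), hq]
  exact Real.rpow_le_rpow (by positivity) hsum (by positivity)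

theorem rpow_one_div_mul_half_rpow {a τ p : ℝ} (ha : 0 ≤ a) (hτ : 0 ≤ τ) (hp : p ≠ 0) :
    (a * (τ / 2) ^ p) ^ (1 / p) = (a * τ ^ p) ^ (1 / p) / 2 := by
  have htwo : ((2 : ℝ) ^ p) ^ (1 / p) = 2 := by
    rw [one_div, Real.rpow_rpow_inv zero_le_two hp]
  rw [Real.div_rpow hτ zero_le_two, ← mul_div_assoc,
    Real.div_rpow (by positivity) (by positivity), htwo]

section GridRound

variable {ι : Type*} {q : ENNReal}

noncomputable def gridRound (τ : ℝ) (α x : PiLp q (fun _ : ι => ℝ)) :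
    PiLp q (fun _ : ι => ℝ) :=
  WithLp.toLp q fun i => α i + round ((x i - α i) / τ) * τ

@[simp]
theorem gridRound_apply (τ : ℝ) (α x : PiLp q (fun _ : ι => ℝ)) (i : ι) :
    gridRound τ α x i = α i + round ((x i - α i) / τ) * τ :=
  rfl

theorem isGridPoint_gridRound {n : ℕ} {τ : ℝ} (hτ : 0 ≤ τ) (α x : PiLp q (fun _ : Fin n => ℝ)) :
    IsGridPoint τ α (gridRound τ α x) := fun i =>
  ⟨(round ((x i - α i) / τ)).natAbs, by
    rw [gridRound_apply, add_sub_cancel_left, abs_mul, abs_of_nonneg hτ, Nat.cast_natAbs,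
      Int.cast_abs]⟩

theorem gridRound_apply_of_eq {τ : ℝ} {α x : PiLp q (fun _ : ι => ℝ)} {i : ι}
    (h : x i = α i) : gridRound τ α x i = α i := by
  simp [h]

theorem dist_gridRound_le [Fintype ι] {p τ : ℝ} (hp : 0 < p) (hτ : 0 < τ)
    (α x : PiLp (ENNReal.ofReal p) (fun _ : ι => ℝ)) :
    dist x (gridRound τ α x) ≤ ((Fintype.card ι : ℝ) * τ ^ p) ^ (1 / p) / 2 := by
  rw [← rpow_one_div_mul_half_rpow (Nat.cast_nonneg _) hτ.le hp.ne']
  refine PiLp.dist_le_of_forall_dist_le hp fun i => ?_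
  rw [Real.dist_eq, gridRound_apply, ← sub_sub]
  exact abs_sub_round_div_mul_le hτ _

end GridRound

theorem csInf_image_sub_le_csInf_image {X : Type*} {g : X → ℝ} {s t : Set X} {r : ℝ}
    (hs : s.Nonempty) (ht : BddBelow (g '' t)) (h : ∀ x ∈ s, ∃ y ∈ t, g y ≤ g x + r) :
    sInf (g '' t) - r ≤ sInf (g '' s) := by
  refine le_csInf (hs.image g) (Set.forall_mem_image.2 fun x hx => ?_)
  obtain ⟨y, hy, hyx⟩ := h x hx
  linarith [csInf_le ht (Set.mem_image_of_mem g hy)]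

theorem feature_restricted_provable_guarantee_general
    (n : ℕ) (p : ℝ) (hp : 1 ≤ p) [Fact (1 ≤ ENNReal.ofReal p)]
    {C : Type*} [Fintype C] [DecidableEq C] [Nontrivial C]
    (f : C → PiLp (ENNReal.ofReal p) (fun _ : Fin n => ℝ) → ℝ)
    (K : C → ℝ) (hK : ∀ c, 0 < K c)
    (hf : ∀ c x y, |f c x - f c y| ≤ K c * dist x y)
    (α : PiLp (ENNReal.ofReal p) (fun _ : Fin n => ℝ))
    (c : C) (d : ℝ)
    (τ : ℝ) (hτ : 0 < τ) (S : Set (Fin n))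
    (hadv : ∃ x : PiLp (ENNReal.ofReal p) (fun _ : Fin n => ℝ),
      (‖x - α‖ ≤ d ∧ 0 < margin f c x) ∧ ∀ i ∉ S, x i = α i)
    (hgrid : ∀ x', IsGridPoint τ α x' →
      ∃ c', (∀ c'', f c' x' ≥ f c'' x') ∧
        ((n : ℝ) * τ ^ p) ^ (1 / p) ≤ 2 * margin f c' x' / Mconst K c') :
    sInf ((fun y => ‖y - α‖) ''
        {y | IsGridPoint τ α y ∧ 0 < margin f c y ∧ ∀ i ∉ S, y i = α i}) -
        ((n : ℝ) * τ ^ p) ^ (1 / p) / 2 ≤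
      sInf ((fun x => ‖x - α‖) ''
        {x | (‖x - α‖ ≤ d ∧ 0 < margin f c x) ∧ ∀ i ∉ S, x i = α i}) ∧
    sInf ((fun x => ‖x - α‖) ''
        {x | (‖x - α‖ ≤ d ∧ 0 < margin f c x) ∧ ∀ i ∉ S, x i = α i}) ≤
      sInf ((fun y => ‖y - α‖) ''
        {y | IsGridPoint τ α y ∧ 0 < margin f c y ∧ ∀ i ∉ S, y i = α i}) := by
  have hdist : ∀ x, dist x (gridRound τ α x) ≤ ((n : ℝ) * τ ^ p) ^ (1 / p) / 2 := fun x => by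
    simpa using dist_gridRound_le (by linarith) hτ α x
  have hrounded : ∀ x, 0 < margin f c x → (∀ i ∉ S, x i = α i) →
      IsGridPoint τ α (gridRound τ α x) ∧ 0 < margin f c (gridRound τ α x) ∧
        ∀ i ∉ S, gridRound τ α x i = α i := by
    intro x hx hxS
    have hgx := isGridPoint_gridRound hτ.le α x
    obtain ⟨c', -, hc'⟩ := hgrid _ hgx
    have hM := Mconst_pos hK c'
    refine ⟨hgx, margin_pos_of_Mconst_mul_dist_le (c' := c') hf hx ?_,
      fun i hi => gridRound_apply_of_eq (hxS i hi)⟩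
    rw [le_div_iff₀ hM] at hc'
    nlinarith [hdist x]
  have hbdd : ∀ s, BddBelow ((fun y => ‖y - α‖) '' s) := fun _ =>
    ⟨0, Set.forall_mem_image.2 fun _ _ => norm_nonneg _⟩
  obtain ⟨x₀, hx₀⟩ := hadv
  constructor
  · refine csInf_image_sub_le_csInf_image ⟨x₀, hx₀⟩ (hbdd _) ?_
    rintro x ⟨⟨-, hx⟩, hxS⟩
    refine ⟨gridRound τ α x, hrounded x hx hxS, ?_⟩
    calc ‖gridRound τ α x - α‖ ≤ ‖gridRound τ α x - x‖ + ‖x - α‖ :=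
          norm_sub_le_norm_sub_add_norm_sub _ _ _
      _ ≤ ‖x - α‖ + ((n : ℝ) * τ ^ p) ^ (1 / p) / 2 := by
          rw [← dist_eq_norm, dist_comm]
          linarith [hdist x]
  · refine (sub_zero _).symm.le.trans (csInf_image_sub_le_csInf_image
      ⟨gridRound τ α x₀, hrounded x₀ hx₀.1.2 hx₀.2⟩ (hbdd _) ?_)
    rintro y ⟨-, hy, hyS⟩
    by_cases hyd : ‖y - α‖ ≤ d
    · exact ⟨y, ⟨⟨hyd, hy⟩, hyS⟩, (add_zero _).ge⟩
    · exact ⟨x₀, hx₀, by linarith [hx₀.1.1]⟩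

/-- **Provable guarantee for feature-restricted finite optimisation:**
`m_{G,S} − δ/2 ≤ m_S ≤ m_{G,S}`. -/
theorem feature_restricted_provable_guarantee
    (n : ℕ) (hn : 1 ≤ n) (p : ℝ) (hp : 1 ≤ p) [Fact (1 ≤ ENNReal.ofReal p)]
    {C : Type*} [Fintype C] [DecidableEq C] [Nontrivial C]
    (f : C → PiLp (ENNReal.ofReal p) (fun _ : Fin n => ℝ) → ℝ)
    (K : C → ℝ) (hK : ∀ c, 0 < K c)
    (hf : ∀ c x y, |f c x - f c y| ≤ K c * dist x y)
    (α : PiLp (ENNReal.ofReal p) (fun _ : Fin n => ℝ))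
    (c₀ : C) (hα : 0 < margin f c₀ α)
    (c : C) (hc : c ≠ c₀) (d : ℝ) (hd : 0 < d)
    (τ : ℝ) (hτ : 0 < τ) (S : Set (Fin n))
    (hadv : ∃ x : PiLp (ENNReal.ofReal p) (fun _ : Fin n => ℝ),
      (‖x - α‖ ≤ d ∧ 0 < margin f c x) ∧ ∀ i ∉ S, x i = α i)
    (hgrid : ∀ x', IsGridPoint τ α x' →
      ∃ c', (∀ c'', f c' x' ≥ f c'' x') ∧
        ((n : ℝ) * τ ^ p) ^ (1 / p) ≤ 2 * margin f c' x' / Mconst K c') :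
    sInf ((fun y => ‖y - α‖) ''
        {y | IsGridPoint τ α y ∧ 0 < margin f c y ∧ ∀ i ∉ S, y i = α i}) -
        ((n : ℝ) * τ ^ p) ^ (1 / p) / 2 ≤
      sInf ((fun x => ‖x - α‖) ''
        {x | (‖x - α‖ ≤ d ∧ 0 < margin f c x) ∧ ∀ i ∉ S, x i = α i}) ∧
    sInf ((fun x => ‖x - α‖) ''
        {x | (‖x - α‖ ≤ d ∧ 0 < margin f c x) ∧ ∀ i ∉ S, x i = α i}) ≤
      sInf ((fun y => ‖y - α‖) ''
        {y | IsGridPoint τ α y ∧ 0 < margin f c y ∧ ∀ i ∉ S, y i = α i}) :=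
  feature_restricted_provable_guarantee_general n p hp f K hK hf α c d τ hτ S hadv hgrid
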